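/- Let X ⊆ A^ℤ be an infinite transitive subshift and let w = w₁⋯wₙ ∈ L(X) be deterministic in X. Then all the symbols w₁, …, wₙ are distinct. -/

import Mathlib

/-- The shift map on bi-infinite sequences. -/
def shiftMap {A : Type*} (x : ℤ → A) : ℤ → A := fun i => x (i + 1)

/-- The `k`-fold shift map (`σ^k`). -/
def shiftPow {A : Type*} (k : ℤ) (x : ℤ → A) : ℤ → A := fun i => x (i + k)

/-- A subshift: a closed shift-invariant subset of `A^ℤ`. -/
def IsSubshift {A : Type*} [TopologicalSpace A] (X : Set (ℤ → A)) : Prop :=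
  IsClosed X ∧ shiftMap '' X = X

/-- The word `w` occurs in `x` at position `i`. -/
def occursAt {A : Type*} (x : ℤ → A) (w : List A) (i : ℤ) : Prop :=
  ∀ (k : ℕ) (hk : k < w.length), x (i + k) = w.get ⟨k, hk⟩

/-- `w` belongs to the language of `X`. -/
def InLang {A : Type*} (X : Set (ℤ → A)) (w : List A) : Prop :=
  ∃ x ∈ X, occursAt x w 0

/-- The set of contexts of a word with respect to `X`. -/
def contexts {A : Type*} (X : Set (ℤ → A)) (w : List A) : Set (List A × List A) :=
  {p | InLang X (p.1 ++ w ++ p.2)}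

/-- `w` is a synchronizing word of `X`. -/
def IsSynchronizing {A : Type*} (X : Set (ℤ → A)) (w : List A) : Prop :=
  InLang X w ∧ ∀ u v : List A, InLang X (u ++ w) → InLang X (w ++ v) → InLang X (u ++ w ++ v)

/-- `X` is a transitive subshift. -/
def IsTransitiveSubshift {A : Type*} (X : Set (ℤ → A)) : Prop :=
  ∀ u v : List A, InLang X u → InLang X v → ∃ w : List A, InLang X (u ++ w ++ v)

/-- A reversible cellular automaton (automorphism) of the subshift `X`. -/
def IsAutomorphism {A : Type*} [TopologicalSpace A] (X : Set (ℤ → A))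
    (F : (ℤ → A) → (ℤ → A)) : Prop :=
  Set.MapsTo F X X ∧ ContinuousOn F X ∧ (∀ x ∈ X, F (shiftMap x) = shiftMap (F x)) ∧
  ∃ G : (ℤ → A) → (ℤ → A), Set.MapsTo G X X ∧ ContinuousOn G X ∧
    (∀ x ∈ X, G (shiftMap x) = shiftMap (G x)) ∧
    (∀ x ∈ X, G (F x) = x) ∧ (∀ x ∈ X, F (G x) = x)

/-- `F` is given on `X` by a local rule of radius `r`. -/
def HasRadius {A : Type*} (X : Set (ℤ → A)) (F : (ℤ → A) → (ℤ → A)) (r : ℕ) : Prop :=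
  ∃ f : (Fin (2 * r + 1) → A) → A, ∀ x ∈ X, ∀ i : ℤ, F x i = f (fun k => x (i - r + k))

/-- `x` is an equicontinuity point of `(X, F)` (combinatorial formulation). -/
def IsEquicontinuityPoint {A : Type*} (X : Set (ℤ → A)) (F : (ℤ → A) → (ℤ → A))
    (x : ℤ → A) : Prop :=
  x ∈ X ∧ ∀ N : ℕ, ∃ M : ℕ, ∀ y ∈ X, (∀ j : ℤ, |j| ≤ (M : ℤ) → y j = x j) →
    ∀ t : ℕ, ∀ j : ℤ, |j| ≤ (N : ℤ) → F^[t] y j = F^[t] x j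

/-!
If `w_i = w_j` with `i < j`, repeating `w_i ⋯ w_{j-1}` gives a `(j - i)`-periodic sequence `c`
each of whose symbols forces its successor and its predecessor. A point of `X` that agrees with
`c` at one coordinate is therefore a shift of `c`, and transitivity places a symbol of any point
before an occurrence of `c 0`, so every point agrees with `c` somewhere. Hence `X` consists of at
most `j - i` shifts of `c`.
-/

section ForcedPairs

variable {A : Type*} {X : Set (ℤ → A)}

theorem exists_periodic_of_apply_add_eq {y : ℤ → A} {i p : ℤ} (hp : 0 < p)
    (hy : y (i + p) = y i) :
    ∃ c : ℤ → A, Function.Periodic c p ∧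
      ∀ s, ∃ k, i ≤ k ∧ k < i + p ∧ c s = y k ∧ c (s + 1) = y (k + 1) := by
  refine ⟨fun s => y (i + s % p), fun s => by simp, fun s => ⟨i + s % p, ?_, ?_, rfl, ?_⟩⟩
  · linarith [Int.emod_nonneg s hp.ne']
  · linarith [Int.emod_lt_of_pos s hp]
  · show y (i + (s + 1) % p) = _
    rw [← Int.emod_add_emod]
    obtain hlt | heq := (Int.add_one_le_of_lt (Int.emod_lt_of_pos s hp)).lt_or_eq
    · rw [Int.emod_eq_of_lt (by linarith [Int.emod_nonneg s hp.ne']) hlt, add_assoc]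
    · rw [heq, Int.emod_self, add_zero, add_assoc, heq, hy]

theorem shiftPow_mem (hX : shiftMap '' X = X) {x : ℤ → A} (hx : x ∈ X) (k : ℤ) :
    shiftPow k x ∈ X := by
  induction k using Int.induction_on with
  | zero => convert hx; funext s; simp [shiftPow]
  | succ k ih =>
    rw [← hX]
    exact ⟨shiftPow k x, ih, funext fun s => by simp only [shiftMap, shiftPow]; ring_nf⟩
  | pred k ih =>
    rw [← hX] at ih
    obtain ⟨z, hz, hzx⟩ := ih
    convert hz using 1
    funext s
    have := congrFun hzx (s - 1)
    simp only [shiftMap, shiftPow, sub_add_cancel] at this ⊢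
    rw [this]; ring_nf

theorem inLang_of_occursAt (hX : shiftMap '' X = X) {x : ℤ → A} (hx : x ∈ X) {u : List A}
    {t : ℤ} (h : occursAt x u t) : InLang X u :=
  ⟨shiftPow t x, shiftPow_mem hX hx t, fun k hk => by simpa [shiftPow, add_comm] using h k hk⟩

theorem inLang_singleton (hX : shiftMap '' X = X) {x : ℤ → A} (hx : x ∈ X) (t : ℤ) :
    InLang X [x t] :=
  inLang_of_occursAt hX hx (t := t) fun k hk => by
    obtain rfl : k = 0 := by simpa using hk
    simp

theorem inLang_pair (hX : shiftMap '' X = X) {x : ℤ → A} (hx : x ∈ X) (t : ℤ) :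
    InLang X [x t, x (t + 1)] :=
  inLang_of_occursAt hX hx (t := t) fun k hk => by
    simp only [List.length_cons, List.length_nil] at hk
    interval_cases k <;> simp

def ForcedPair (X : Set (ℤ → A)) (a b : A) : Prop :=
  (∀ c, InLang X [a, c] → c = b) ∧ ∀ c, InLang X [c, b] → c = a

theorem apply_add_eq_of_forcedPair (hX : shiftMap '' X = X) {c : ℤ → A}
    (hc : ∀ s, ForcedPair X (c s) (c (s + 1))) {x : ℤ → A} (hx : x ∈ X) {t θ : ℤ}
    (ht : x t = c θ) (s : ℤ) : x (t + s) = c (θ + s) := by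
  induction s using Int.induction_on with
  | zero => simpa using ht
  | succ k ih =>
    have hpair := inLang_pair hX hx (t + k)
    rw [ih] at hpair
    rw [← add_assoc, ← add_assoc]
    exact (hc _).1 _ hpair
  | pred k ih =>
    have hpair := inLang_pair hX hx (t + (-k - 1))
    rw [show t + (-k - 1) + 1 = t + -k by ring, ih,
      show θ + -k = θ + (-k - 1) + 1 by ring] at hpair
    exact (hc _).2 _ hpair

theorem eq_shiftPow_of_transitive (hX : shiftMap '' X = X) (htrans : IsTransitiveSubshift X)
    {c : ℤ → A} (hc : ∀ s, ForcedPair X (c s) (c (s + 1))) (hc0 : InLang X [c 0])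
    {x : ℤ → A} (hx : x ∈ X) : ∃ θ, x = shiftPow θ c := by
  obtain ⟨v, y, hy, hocc⟩ := htrans [x 0] [c 0] (inLang_singleton hX hx 0) hc0
  have hy0 : y 0 = x 0 := by simpa using hocc 0 (by simp)
  have hyc : y (v.length + 1) = c 0 := by simpa using hocc (v.length + 1) (by simp)
  have hx0 : x 0 = c (-(v.length + 1)) := by
    simpa [← hy0] using apply_add_eq_of_forcedPair hX hc hy hyc (-(v.length + 1))
  refine ⟨-(v.length + 1), funext fun s => ?_⟩
  simpa [shiftPow, add_comm] using apply_add_eq_of_forcedPair hX hc hx hx0 s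

theorem finite_of_transitive_of_periodic (hX : shiftMap '' X = X)
    (htrans : IsTransitiveSubshift X) {c : ℤ → A} {p : ℤ} (hp : 0 < p)
    (hper : Function.Periodic c p) (hc : ∀ s, ForcedPair X (c s) (c (s + 1)))
    (hc0 : InLang X [c 0]) : X.Finite := by
  have hshift : Function.Periodic (fun θ => shiftPow θ c) p := fun θ => by
    funext s; simp only [shiftPow, ← add_assoc, hper _]
  have hrange : (Set.range fun θ => shiftPow θ c).Finite := by
    rw [← hshift.image_Ioc hp 0]
    exact (Set.finite_Ioc _ _).image _
  exact hrange.subset fun x hx =>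
    (eq_shiftPow_of_transitive hX htrans hc hc0 hx).imp fun _ => Eq.symm

end ForcedPairs

/-- In an infinite transitive subshift, a word `w` all of whose symbols have
unique successors (at positions `< n`) and unique predecessors (at positions `> 1`) has all
its symbols distinct. -/
theorem stmt7 {A : Type*} [TopologicalSpace A]
    (X : Set (ℤ → A)) (hX : IsSubshift X) (hinf : X.Infinite)
    (htrans : IsTransitiveSubshift X)
    (w : List A) (hw : InLang X w)
    (hfd : ∀ (i : ℕ) (hi : i + 1 < w.length), ∀ a : A,
      InLang X [w.get ⟨i, by omega⟩, a] → a = w.get ⟨i + 1, hi⟩)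
    (hpd : ∀ (i : ℕ) (hi : i + 1 < w.length), ∀ a : A,
      InLang X [a, w.get ⟨i + 1, hi⟩] → a = w.get ⟨i, by omega⟩) :
    w.Nodup := by
  obtain ⟨y, hy, hyw⟩ := hw
  have hyw' (k : ℕ) (hk : k < w.length) : y k = w[k] := by simpa using hyw k hk
  have hforced : ∀ k : ℤ, 0 ≤ k → k + 1 < w.length → ForcedPair X (y k) (y (k + 1)) := by
    intro k hk0 hk
    lift k to ℕ using hk0
    have hk' : k + 1 < w.length := by exact_mod_cast hk
    rw [hyw' k (by omega), ← Nat.cast_succ, hyw' (k + 1) hk']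
    exact ⟨hfd k hk', hpd k hk'⟩
  rw [List.nodup_iff_pairwise_ne, List.pairwise_iff_getElem]
  intro i j hi hj hij hwij
  obtain ⟨c, hper, hc⟩ := exists_periodic_of_apply_add_eq (y := y) (i := i) (p := j - i)
    (by omega) (by rw [add_sub_cancel, hyw' i hi, hyw' j hj, hwij])
  have hcforced : ∀ s, ForcedPair X (c s) (c (s + 1)) := fun s => by
    obtain ⟨k, hik, hkj, hs, hs1⟩ := hc s
    rw [hs, hs1]
    exact hforced k (by omega) (by omega)
  obtain ⟨k, -, -, hc0, -⟩ := hc 0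
  exact hinf (finite_of_transitive_of_periodic hX.2 htrans (by omega) hper hcforced
    (hc0 ▸ inLang_singleton hX.2 hy k))
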